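/- Let G be a subgroup of GL(d,F) for some field F and positive integer d, suppose G is VUF-linear, and let A be an abelian subgroup of G which is central in G. Let π : G → G/[G,G] be the quotient homomorphism onto the abelianisation of G. Then the set of elements of A lying in the kernel of π is finite. -/

import Mathlib

open Matrix

set_option maxHeartbeats 1000000
set_option synthInstance.maxHeartbeats 1000000

/-- `M ∈ GL(d,F)` is unipotent if `(M - I)^d = 0`. -/
def IsUnipotent {d : ℕ} {F : Type} [Field F] (M : GL (Fin d) F) : Prop :=
  ((M : Matrix (Fin d) (Fin d) F) - 1) ^ d = 0

lemma nilp_eq_zero {R : Type*} [CommRing R] {n : R} (hn : IsNilpotent n) {q : ℕ}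
    (hq : IsUnit (q : R)) (h : (1 + n) ^ q = 1) : n = 0 := by
  rcases Nat.eq_zero_or_pos q with rfl | hq0
  · have h01 : (0 : R) = 1 := by simpa using isUnit_zero_iff.mp (by simpa using hq)
    have : Subsingleton R := subsingleton_of_zero_eq_one h01
    exact Subsingleton.elim _ _
  · have expand : (1 + n) ^ q = ∑ k ∈ Finset.range (q + 1), n ^ k * (q.choose k : R) := by
      rw [add_comm]
      simpa using add_pow n 1 q
    have h1 : (∑ k ∈ Finset.range q, n ^ (k + 1) * (q.choose (k + 1) : R)) = 0 := by
      have := expand.symm.trans h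
      rw [Finset.sum_range_succ'] at this
      simpa using this
    set S := ∑ k ∈ Finset.range q, n ^ k * (q.choose (k + 1) : R) with hS
    have h2 : n * S = 0 := by
      rw [hS, Finset.mul_sum, ← h1]
      congr 1; ext k; ring
    have hSunit : IsUnit S := by
      obtain ⟨q', hq'⟩ := Nat.exists_eq_add_of_lt hq0
      have hq'' : q = q' + 1 := by omega
      subst hq''
      rw [hS, Finset.sum_range_succ']
      simp only [pow_zero, one_mul, zero_add, Nat.choose_one_right]
      have factor : (∑ k ∈ Finset.range q', n ^ (k + 1) * (((q' + 1).choose (k + 1 + 1)) : R))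
          = n * ∑ k ∈ Finset.range q', n ^ k * (((q' + 1).choose (k + 1 + 1)) : R) := by
        rw [Finset.mul_sum]; congr 1; ext k; ring
      rw [factor, add_comm]
      exact ((Commute.all n _).isNilpotent_mul_right hn).isUnit_add_left_of_commute hq
        (Commute.all _ _)
    obtain ⟨v, hv⟩ := hSunit
    have h3 : n * S * (↑v⁻¹ : R) = 0 := by rw [h2, zero_mul]
    rwa [← hv, mul_assoc, v.mul_inv, mul_one] at h3

lemma eq_of_pow_eq_one_of_sub_nilpotent {R : Type*} [CommRing R] {x y : R} {q : ℕ}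
    (hq0 : 0 < q) (hq : IsUnit (q : R)) (hx : x ^ q = 1) (hy : y ^ q = 1)
    (hnil : IsNilpotent (x - y)) : x = y := by
  have hn : IsNilpotent (y ^ (q - 1) * x - 1) := by
    have : y ^ (q - 1) * x - 1 = y ^ (q - 1) * (x - y) := by
      have : y ^ (q - 1) * y = 1 := by
        rw [← pow_succ, Nat.sub_add_cancel hq0]; exact hy
      rw [mul_sub, this]
    rw [this]
    exact (Commute.all _ _).isNilpotent_mul_left hnil
  have hpow : (1 + (y ^ (q - 1) * x - 1)) ^ q = 1 := by
    rw [add_sub_cancel, mul_pow, ← pow_mul, mul_comm (q-1) q, pow_mul, hy, one_pow, one_mul, hx]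
  have h0 := nilp_eq_zero hn hq hpow
  have h1 : y ^ (q - 1) * x = 1 := by linear_combination h0
  calc x = y * (y ^ (q - 1) * x) := by
          rw [← mul_assoc, ← pow_succ', Nat.sub_add_cancel hq0, hy, one_mul]
       _ = y := by rw [h1, mul_one]

lemma det_smul_one_add_nilpotent {n : Type*} [Fintype n] [DecidableEq n] {L : Type*} [Field L]
    {N : Matrix n n L} (hN : IsNilpotent N) (μ : L) :
    (μ • (1 : Matrix n n L) + N).det = μ ^ (Fintype.card n) := by
  have hc : (-N).charpoly = Polynomial.X ^ (Fintype.card n) := by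
    rw [← sub_eq_zero]
    exact (Matrix.isNilpotent_charpoly_sub_pow_of_isNilpotent hN.neg).eq_zero
  have heval : Polynomial.eval μ ((-N).charpoly) = (μ • (1 : Matrix n n L) + N).det := by
    rw [Matrix.charpoly, ← Polynomial.coe_evalRingHom, RingHom.map_det]
    congr 1
    ext i j
    by_cases hij : i = j
    · subst hij
      simp [Matrix.charmatrix_apply_eq, Matrix.one_apply]
    · simp [Matrix.charmatrix_apply_ne _ _ _ hij, Matrix.one_apply_ne hij]
  rw [← heval, hc]
  simp

lemma finite_of_commute_pow_eq_one {F : Type*} [Field F] {B : Type*} [Ring B] [Algebra F B]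
    [FiniteDimensional F B] (T : Set B) (hcomm : ∀ x ∈ T, ∀ y ∈ T, x * y = y * x)
    {q : ℕ} (hq0 : 0 < q) (hq : (q : F) ≠ 0) (hT : ∀ x ∈ T, x ^ q = 1) : T.Finite := by
  let R := Algebra.adjoin F T
  letI : CommRing ↥R := Algebra.adjoinCommRingOfComm F hcomm
  haveI : IsArtinianRing ↥R := by
    have h1 : IsArtinian F ↥R := inferInstance
    exact isArtinian_of_tower F h1
  haveI : Finite (MaximalSpectrum ↥R) := inferInstance
  let e := IsArtinianRing.quotNilradicalEquivPi ↥R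
  let π : ↥R →+* ↥R ⧸ nilradical ↥R := Ideal.Quotient.mk (nilradical ↥R)
  let j : T → ↥R := fun x => ⟨x.1, Algebra.subset_adjoin x.2⟩
  let Φ : T → ∀ I : MaximalSpectrum ↥R, ↥R ⧸ I.1 := fun x => e (π (j x))
  have hqR : IsUnit ((q : ↥R)) := by
    have h2 : (algebraMap F ↥R) (q : F) = (q : ↥R) := map_natCast _ q
    exact h2 ▸ (IsUnit.map (algebraMap F ↥R) (isUnit_iff_ne_zero.mpr hq))
  have hpow : ∀ x : T, (j x) ^ q = 1 := by
    intro x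
    ext
    push_cast
    exact hT x.1 x.2
  have hΦinj : Function.Injective Φ := by
    intro x y hxy
    have hmk : π (j x) = π (j y) := e.injective hxy
    have hnil : IsNilpotent (j x - j y) := by
      have hmem : j x - j y ∈ nilradical ↥R := by
        rw [← Ideal.Quotient.eq_zero_iff_mem]
        show π (j x - j y) = 0
        rw [_root_.map_sub, sub_eq_zero]
        exact hmk
      simpa [mem_nilradical] using hmem
    have hje := eq_of_pow_eq_one_of_sub_nilpotent hq0 hqR (hpow x) (hpow y) hnil
    exact Subtype.ext (show (x.1 : B) = y.1 from congrArg (fun r : ↥R => (r : B)) hje)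
  have hΦmem : ∀ x : T, Φ x ∈ Set.pi Set.univ
      (fun I : MaximalSpectrum ↥R => {y : ↥R ⧸ I.1 | y ^ q = 1}) := by
    intro x I _
    have h1 : (Φ x) ^ q = 1 := by
      show (e (π (j x))) ^ q = 1
      rw [← _root_.map_pow, ← _root_.map_pow, hpow x, _root_.map_one, _root_.map_one]
    show (Φ x I) ^ q = 1
    calc (Φ x I) ^ q = ((Φ x) ^ q) I := rfl
      _ = 1 := by rw [h1]; rfl
  have hfin : (Set.pi Set.univ
      (fun I : MaximalSpectrum ↥R => {y : ↥R ⧸ I.1 | y ^ q = 1})).Finite := by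
    apply Set.Finite.pi
    intro I
    haveI : I.1.IsMaximal := I.2
    have hpne : (Polynomial.X ^ q - Polynomial.C 1 : Polynomial (↥R ⧸ I.1)) ≠ 0 :=
      Polynomial.X_pow_sub_C_ne_zero hq0 1
    apply (Polynomial.finite_setOf_isRoot hpne).subset
    intro y hy
    simp only [Set.mem_setOf_eq] at hy ⊢
    simp [Polynomial.IsRoot, hy]
  haveI := hfin.to_subtype
  haveI : Finite ↥T := Finite.of_injective (fun x : T => (⟨Φ x, hΦmem x⟩ : ↥(Set.pi Set.univ
      (fun I : MaximalSpectrum ↥R => {y : ↥R ⧸ I.1 | y ^ q = 1}))))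
    (fun a b h => hΦinj (Subtype.ext_iff.mp h))
  exact Set.finite_coe_iff.mp inferInstance

lemma det_end_of_nilpotent_sub {L W : Type*} [Field L] [AddCommGroup W] [Module L W]
    [FiniteDimensional L W] {r : Module.End L W} {μ : L}
    (h : IsNilpotent (r - μ • 1)) :
    LinearMap.det r = μ ^ (Module.finrank L W) := by
  classical
  let B := Module.finBasis L W
  let ψ := LinearMap.toMatrixAlgEquiv B
  have hψ : ∀ x, ψ x = LinearMap.toMatrix B B x := fun _ => rfl
  rw [← LinearMap.det_toMatrix B, ← hψ]
  have hnil : IsNilpotent (ψ (r - μ • 1)) := h.map ψ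
  have hsplit : ψ r = μ • (1 : Matrix _ _ L) + ψ (r - μ • 1) := by
    have h1 : (μ • (1 : Module.End L W)) = algebraMap L (Module.End L W) μ :=
      (Algebra.algebraMap_eq_smul_one μ).symm
    have h2 : (μ • (1 : Matrix (Fin (Module.finrank L W)) (Fin (Module.finrank L W)) L))
        = algebraMap L _ μ := (Algebra.algebraMap_eq_smul_one μ).symm
    rw [_root_.map_sub, h1, h2, AlgEquiv.commutes]
    abel
  rw [hsplit, det_smul_one_add_nilpotent hnil μ]
  simp

lemma pow_unipotent_of_central_of_ab_one {d : ℕ} {F : Type} [Field F]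
    (G : Subgroup (GL (Fin d) F)) {q : ℕ}
    (hq3 : ∀ μ : AlgebraicClosure F, μ ^ (Nat.factorial d) = 1 → μ ^ q = 1)
    (z : ↥G) (hz1 : z ∈ Subgroup.center ↥G) (hz2 : Abelianization.of z = 1) :
    ((((z : GL (Fin d) F) : Matrix (Fin d) (Fin d) F)) ^ q - 1) ^ d = 0 := by
  classical
  set L := AlgebraicClosure F
  let φ : Matrix (Fin d) (Fin d) F →+* Matrix (Fin d) (Fin d) L :=
    (algebraMap F L).mapMatrix
  have hφinj : Function.Injective φ :=
    Matrix.map_injective (algebraMap F L).injective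
  let ε : Matrix (Fin d) (Fin d) L ≃ₐ[L] Module.End L (Fin d → L) := Matrix.toLinAlgEquiv'
  let E : ↥G → Module.End L (Fin d → L) :=
    fun g => ε (φ (((g : GL (Fin d) F) : Matrix (Fin d) (Fin d) F)))
  have hE : ∀ g h : ↥G, E (g * h) = E g * E h := by
    intro g h
    show ε (φ _) = _
    rw [show (((g * h : ↥G) : GL (Fin d) F) : Matrix (Fin d) (Fin d) F)
        = ((g : GL (Fin d) F) : Matrix (Fin d) (Fin d) F)
        * ((h : GL (Fin d) F) : Matrix (Fin d) (Fin d) F) by rfl]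
    rw [_root_.map_mul, _root_.map_mul]
  have hE1 : E 1 = 1 := by
    show ε (φ _) = _
    rw [show (((1 : ↥G) : GL (Fin d) F) : Matrix (Fin d) (Fin d) F) = 1 by rfl]
    rw [_root_.map_one, _root_.map_one]
  set f : Module.End L (Fin d → L) := E z with hf
  have hcomm : ∀ g : ↥G, Commute f (E g) := by
    intro g
    have hzg : z * g = g * z := (Subgroup.mem_center_iff.mp hz1 g).symm
    show f * E g = E g * f
    rw [hf, ← hE, ← hE, hzg]
  have hsup : ⨆ μ, f.maxGenEigenspace μ = ⊤ := Module.End.iSup_maxGenEigenspace_eq_top f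
  have hd' : Module.finrank L (Fin d → L) = d := by
    rw [Module.finrank_pi]; simp
  have key : ∀ μ : L, f.maxGenEigenspace μ ≤ LinearMap.ker ((f ^ q - 1) ^ d) := by
    intro μ
    by_cases hbot : f.maxGenEigenspace μ = ⊥
    · rw [hbot]; exact bot_le
    set W := f.maxGenEigenspace μ with hW
    have hmaps : ∀ g : ↥G, Set.MapsTo (E g) W W :=
      fun g => Module.End.mapsTo_maxGenEigenspace_of_comm (hcomm g) μ
    let D : ↥G →* L :=
      { toFun := fun g => LinearMap.det ((E g).restrict (hmaps g))
        map_one' := by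
          show LinearMap.det ((E 1).restrict (hmaps 1)) = 1
          have h1 : (E 1).restrict (hmaps 1) = LinearMap.id := by
            refine LinearMap.ext fun x => Subtype.ext ?_
            simp [LinearMap.restrict_apply, hE1]
          rw [h1]
          exact LinearMap.det_id
        map_mul' := fun g h => by
          show LinearMap.det ((E (g * h)).restrict (hmaps (g * h)))
              = LinearMap.det ((E g).restrict (hmaps g))
              * LinearMap.det ((E h).restrict (hmaps h))
          have h1 : (E (g * h)).restrict (hmaps (g * h))
              = ((E g).restrict (hmaps g)) ∘ₗ ((E h).restrict (hmaps h)) := by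
            refine LinearMap.ext fun x => Subtype.ext ?_
            simp [LinearMap.restrict_apply, LinearMap.coe_restrict_apply, hE g h]
            rfl
          rw [h1, LinearMap.det_comp] }
    have hDz : D z = 1 := by
      have h1 : D.toHomUnits z = Abelianization.lift D.toHomUnits (Abelianization.of z) :=
        (Abelianization.lift_apply_of D.toHomUnits z).symm
      rw [hz2, _root_.map_one] at h1
      have h2 := congrArg Units.val h1
      simpa using h2
    have hnil : IsNilpotent ((f.restrict (hmaps z)) - μ • 1) := by
      have h2 := Module.End.isNilpotent_restrict_maxGenEigenspace_sub_algebraMap f μ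
        (Module.End.mapsTo_maxGenEigenspace_of_comm
          (Algebra.mul_sub_algebraMap_commutes f μ) μ)
      have h3 : (f - algebraMap L (Module.End L (Fin d → L)) μ).restrict
          (Module.End.mapsTo_maxGenEigenspace_of_comm
            (Algebra.mul_sub_algebraMap_commutes f μ) μ)
          = (f.restrict (hmaps z)) - μ • 1 := by
        refine LinearMap.ext fun x => Subtype.ext ?_
        show (f - algebraMap L (Module.End L (Fin d → L)) μ) x = f x - μ • (x : Fin d → L)
        simp [LinearMap.restrict_apply, LinearMap.coe_restrict_apply, Module.algebraMap_end_apply]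
      rwa [h3] at h2
    have hdet : D z = μ ^ (Module.finrank L ↥W) := det_end_of_nilpotent_sub hnil
    have hμn : μ ^ (Module.finrank L ↥W) = 1 := by rw [← hdet, hDz]
    have hfrpos : 0 < Module.finrank L ↥W := by
      rcases Nat.eq_zero_or_pos (Module.finrank L ↥W) with h0 | h
      · exact absurd (Submodule.finrank_eq_zero.mp h0) hbot
      · exact h
    have hfrle : Module.finrank L ↥W ≤ d := by
      have h4 := Submodule.finrank_le W
      rwa [hd'] at h4
    have hμfact : μ ^ (Nat.factorial d) = 1 := by
      obtain ⟨c, hc⟩ := Nat.dvd_factorial hfrpos hfrle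
      rw [hc, pow_mul, hμn, one_pow]
    have hμq : μ ^ q = 1 := hq3 μ hμfact
    intro x hx
    rw [LinearMap.mem_ker]
    have hcommf : Commute (algebraMap L (Module.End L (Fin d → L)) μ) f :=
      Algebra.commute_algebraMap_left μ f
    have hgeom := (hcommf.symm).geom_sum₂_mul q
    have halg : (algebraMap L (Module.End L (Fin d → L)) μ) ^ q = 1 := by
      rw [← _root_.map_pow, hμq, _root_.map_one]
    rw [halg] at hgeom
    set c : Module.End L (Fin d → L) :=
      ∑ i ∈ Finset.range q, f ^ i * (algebraMap L (Module.End L (Fin d → L)) μ) ^ (q - 1 - i)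
      with hc
    have hcommc : Commute c (f - algebraMap L (Module.End L (Fin d → L)) μ) := by
      apply Commute.sum_left
      intro i _
      have h1 : Commute (f ^ i * (algebraMap L (Module.End L (Fin d → L)) μ) ^ (q - 1 - i)) f :=
        ((Commute.refl f).pow_left i).mul_left ((hcommf.pow_left _))
      have h2 : Commute (f ^ i * (algebraMap L (Module.End L (Fin d → L)) μ) ^ (q - 1 - i))
          (algebraMap L (Module.End L (Fin d → L)) μ) :=
        ((hcommf.symm).pow_left i).mul_left ((Commute.refl _).pow_left _)
      exact h1.sub_right h2
    have hpowd : (f ^ q - 1) ^ d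
        = c ^ d * (f - algebraMap L (Module.End L (Fin d → L)) μ) ^ d := by
      rw [← hgeom, hcommc.mul_pow]
    rw [hpowd]
    have hxgen : ((f - μ • 1) ^ d) x = 0 := by
      have h5 : W = Module.End.genEigenspace f μ ((Module.finrank L (Fin d → L) : ℕ) : ℕ∞) :=
        Module.End.maxGenEigenspace_eq_genEigenspace_finrank f μ
      rw [hd'] at h5
      have h4 : x ∈ Module.End.genEigenspace f μ ((d : ℕ) : ℕ∞) := h5 ▸ hx
      rwa [Module.End.mem_genEigenspace_nat] at h4
    have halg1 : algebraMap L (Module.End L (Fin d → L)) μ = μ • 1 := by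
      refine LinearMap.ext fun v => ?_
      simp [Module.algebraMap_end_apply]
    rw [Module.End.mul_apply, halg1, hxgen, map_zero]
  have hker : ((f ^ q - 1) ^ d) = 0 := by
    rw [← LinearMap.ker_eq_top, ← top_le_iff, ← hsup]
    exact iSup_le key
  set M := ((z : GL (Fin d) F) : Matrix (Fin d) (Fin d) F) with hM
  have h2 : φ ((M ^ q - 1) ^ d) = 0 := by
    apply ε.injective
    rw [_root_.map_zero]
    calc ε (φ ((M ^ q - 1) ^ d)) = (ε (φ M) ^ q - 1) ^ d := by
          rw [_root_.map_pow, _root_.map_sub, _root_.map_pow, _root_.map_one,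
            _root_.map_pow, _root_.map_sub, _root_.map_pow, _root_.map_one]
      _ = (f ^ q - 1) ^ d := rfl
      _ = 0 := hker
  exact hφinj (h2.trans (map_zero φ).symm)

lemma exists_good_q (d : ℕ) (F : Type) [Field F] :
    ∃ q : ℕ, 0 < q ∧ (q : F) ≠ 0 ∧
      ∀ μ : AlgebraicClosure F, μ ^ (Nat.factorial d) = 1 → μ ^ q = 1 := by
  set p := ringChar F with hp
  haveI hcp : CharP F p := ringChar.charP F
  rcases CharP.char_is_prime_or_zero F p with hprime | hzero
  · haveI : Fact p.Prime := ⟨hprime⟩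
    refine ⟨(Nat.factorial d) / p ^ ((Nat.factorial d).factorization p),
      Nat.ordCompl_pos p (Nat.factorial_ne_zero d), ?_, ?_⟩
    · rw [Ne, CharP.cast_eq_zero_iff F p]
      exact Nat.not_dvd_ordCompl hprime (Nat.factorial_ne_zero d)
    · intro μ hμ
      haveI : CharP (AlgebraicClosure F) p :=
        charP_of_injective_algebraMap (algebraMap F (AlgebraicClosure F)).injective p
      set k := (Nat.factorial d).factorization p with hk
      have hfac : p ^ k * ((Nat.factorial d) / p ^ k) = Nat.factorial d :=
        Nat.ordProj_mul_ordCompl_eq_self (Nat.factorial d) p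
      have h1 : (μ ^ ((Nat.factorial d) / p ^ k)) ^ (p ^ k) = 1 := by
        rw [← pow_mul, mul_comm, hfac, hμ]
      set y := μ ^ ((Nat.factorial d) / p ^ k)
      have h2 : (y - 1) ^ (p ^ k) = 0 := by
        rw [sub_pow_char_pow, h1, one_pow, sub_self]
      have h3 : y - 1 = 0 := by
        rw [pow_eq_zero_iff (pow_ne_zero k hprime.pos.ne')] at h2
        exact h2
      rw [sub_eq_zero] at h3
      exact h3
  · refine ⟨Nat.factorial d, Nat.factorial_pos d, ?_, fun μ hμ => hμ⟩
    haveI : CharP F 0 := hzero ▸ hcp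
    haveI : CharZero F := CharP.charP_to_charZero F
    exact Nat.cast_ne_zero.mpr (Nat.factorial_ne_zero d)

/-- If `G ≤ GL(d,F)` is VUF-linear and `A` is an abelian (indeed central) subgroup of `G`,
then the set of elements of `A` lying in the kernel of the abelianisation map
`G → G/[G,G]` is finite. -/
theorem stmt_7 {d : ℕ} (hd : 0 < d) {F : Type} [Field F] (G : Subgroup (GL (Fin d) F))
    (hVUF : ∃ H : Subgroup (GL (Fin d) F), H ≤ G ∧ H.relIndex G ≠ 0 ∧
      ∀ h ∈ H, IsUnipotent h → h = 1)
    (A : Subgroup ↥G) (hA : A ≤ Subgroup.center ↥G) :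
    Set.Finite {a : ↥G | a ∈ A ∧ Abelianization.of a = 1} := by
  classical
  obtain ⟨H, hHG, hHrel, hHunip⟩ := hVUF
  obtain ⟨q, hq0, hqF, hq3⟩ := exists_good_q d F
  set K : Subgroup ↥G := A ⊓ MonoidHom.ker (Abelianization.of (G := ↥G)) with hK
  have hSK : {a : ↥G | a ∈ A ∧ Abelianization.of a = 1} = (K : Set ↥G) := by
    ext a
    simp only [hK, Subgroup.mem_inf, MonoidHom.mem_ker, Set.mem_setOf_eq, SetLike.mem_coe]
  set H' : Subgroup ↥G := H.subgroupOf G with hH'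
  haveI hH'fi : H'.FiniteIndex := ⟨hHrel⟩
  -- each element of K ⊓ H' satisfies z ^ q = 1
  have hzq : ∀ z : ↥G, z ∈ K ⊓ H' → z ^ q = 1 := by
    intro z hz
    obtain ⟨⟨hzA, hzker⟩, hzH⟩ := Subgroup.mem_inf.mp hz
    have hz1 : z ∈ Subgroup.center ↥G := hA hzA
    have hz2 : Abelianization.of z = 1 := MonoidHom.mem_ker.mp hzker
    have hmat := pow_unipotent_of_central_of_ab_one G hq3 z hz1 hz2
    have hzqH : ((z : GL (Fin d) F) ^ q) ∈ H := by
      have : (z : GL (Fin d) F) ∈ H := hzH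
      exact pow_mem this q
    have hunip : IsUnipotent ((z : GL (Fin d) F) ^ q) := by
      show ((((z : GL (Fin d) F) ^ q : GL (Fin d) F) : Matrix (Fin d) (Fin d) F) - 1) ^ d = 0
      rw [Units.val_pow_eq_pow_val]
      exact hmat
    have hone : (z : GL (Fin d) F) ^ q = 1 := hHunip _ hzqH hunip
    ext
    rw [SubgroupClass.coe_pow, hone, OneMemClass.coe_one]
  -- the matrix image of K ⊓ H' is finite
  have hTfin : Set.Finite ((fun z : ↥G =>
      ((z : GL (Fin d) F) : Matrix (Fin d) (Fin d) F)) '' ((K ⊓ H' : Subgroup ↥G) : Set ↥G)) := by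
    apply finite_of_commute_pow_eq_one (F := F) _ ?_ hq0 hqF ?_
    · rintro x ⟨z, hzmem, rfl⟩ y ⟨w, hwmem, rfl⟩
      have hzA : z ∈ A := (Subgroup.mem_inf.mp hzmem).1.1
      have hcomm : z * w = w * z := ((Subgroup.mem_center_iff.mp (hA hzA)) w).symm
      have := congrArg (fun u : ↥G => ((u : GL (Fin d) F) : Matrix (Fin d) (Fin d) F)) hcomm
      simpa using this
    · rintro x ⟨z, hzmem, rfl⟩
      have h1 := hzq z hzmem
      have := congrArg (fun u : ↥G => ((u : GL (Fin d) F) : Matrix (Fin d) (Fin d) F)) h1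
      simpa using this
  have hKH'fin : Set.Finite ((K ⊓ H' : Subgroup ↥G) : Set ↥G) := by
    apply Set.Finite.of_finite_image hTfin
    intro x _ y _ hxy
    exact Subtype.ext (Units.ext hxy)
  haveI hfin1 : Finite ↥(K ⊓ H' : Subgroup ↥G) := hKH'fin.to_subtype
  haveI hfin2 : Finite ↥(H'.subgroupOf K) := by
    apply Finite.of_injective (fun x : ↥(H'.subgroupOf K) =>
      (⟨x.1.1, Subgroup.mem_inf.mpr ⟨x.1.2, Subgroup.mem_subgroupOf.mp x.2⟩⟩
        : ↥(K ⊓ H' : Subgroup ↥G)))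
    intro a b hab
    have h1 : ((a.1 : ↥K) : ↥G) = ((b.1 : ↥K) : ↥G) := congrArg (fun y : ↥(K ⊓ H' : Subgroup ↥G) => (y : ↥G)) hab
    exact Subtype.ext (Subtype.ext h1)
  haveI : Finite (↥K ⧸ H'.subgroupOf K) := Subgroup.finite_quotient_of_finiteIndex
  haveI : Finite ↥K := Finite.of_equiv _ (Subgroup.groupEquivQuotientProdSubgroup
    (s := H'.subgroupOf K)).symm
  rw [hSK]
  exact Set.finite_coe_iff.mp inferInstance
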